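/- arXiv:0812.4826 — 3 statements merged into one kernel-verified Lean document; each statement's English description precedes it below -/
import Mathlib

section
/- Let λ, μ > 0 and let N₁, N₂ be independent ℕ-valued random variables with Poisson distributions of means λ and μ, respectively. Then E[ N₁/(N₁+N₂) ] = (λ/(λ+μ))·(1 − exp(−(λ+μ))), where the ratio N₁/(N₁+N₂) is defined to be 0 on the event N₁ + N₂ = 0. -/
open MeasureTheory ProbabilityTheory Real

open scoped NNReal Nat

/-! The Poisson weights satisfy `n p(n) = r p(n - 1)`, so `E[N g(N)] = r E[g(N + 1)]`. Applied to
`N₁` inside `E[N₁ / (N₁ + N₂)]`, this turns the ratio into `λ E[1 / (M + 1)]` with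
`M = N₁ + N₂ ~ Poisson(λ + μ)`; the same identity for `g n = 1 / n` gives
`(λ + μ) E[1 / (M + 1)] = P(M ≠ 0) = 1 - exp (-(λ + μ))`. -/

-- No integrability is needed: both integrals are sums of the same terms, so non-summable
-- cases give `0 = 0`.
theorem integral_mul_poissonMeasure (r : ℝ≥0) (g : ℕ → ℝ) :
    ∫ n, n * g n ∂poissonMeasure r = r * ∫ n, g (n + 1) ∂poissonMeasure r := by
  have hweight (n : ℕ) :
      exp (-r) * r ^ (n + 1) / (n + 1)! * (n + 1 : ℕ) = r * (exp (-r) * r ^ n / n !) := by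
    rw [Nat.factorial_succ]
    push_cast
    field_simp
    ring
  have hsupp : Function.support (fun n : ℕ ↦ (exp (-r) * r ^ n / n !) • ((n : ℝ) * g n))
      ⊆ Set.range Nat.succ := by
    rintro (_ | n) h
    · simp at h
    · exact ⟨n, rfl⟩
  rw [integral_poissonMeasure, integral_poissonMeasure, ← tsum_mul_left,
    ← Nat.succ_injective.tsum_eq hsupp]
  refine tsum_congr fun n ↦ ?_
  simp only [smul_eq_mul, Nat.succ_eq_add_one]
  rw [← mul_assoc, hweight]
  ring

theorem mul_integral_inv_succ_poissonMeasure (r : ℝ≥0) :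
    r * ∫ n, ((n + 1 : ℕ) : ℝ)⁻¹ ∂poissonMeasure r = 1 - exp (-r) := by
  have hind : (fun n : ℕ ↦ (n : ℝ) * (n : ℝ)⁻¹) = ({0}ᶜ : Set ℕ).indicator 1 := by
    ext (_ | n) <;> simp [Nat.cast_add_one_ne_zero]
  rw [← integral_mul_poissonMeasure r (fun n ↦ (n : ℝ)⁻¹), hind,
    integral_indicator_one (measurableSet_singleton 0).compl,
    probReal_compl_eq_one_sub (measurableSet_singleton 0), poissonMeasure_real_singleton]
  simp

theorem integral_fst_mul_comp_add_prod_poissonMeasure (r₁ r₂ : ℝ≥0) (g : ℕ → ℝ)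
    (hg : Integrable (fun z : ℕ × ℕ ↦ z.1 * g (z.1 + z.2))
      ((poissonMeasure r₁).prod (poissonMeasure r₂)))
    (hg' : Integrable (fun n ↦ g (n + 1)) (poissonMeasure (r₁ + r₂))) :
    ∫ z, z.1 * g (z.1 + z.2) ∂(poissonMeasure r₁).prod (poissonMeasure r₂)
      = r₁ * ∫ n, g (n + 1) ∂poissonMeasure (r₁ + r₂) := by
  rw [add_comm, ← poissonMeasure_conv_poissonMeasure] at hg' ⊢
  rw [integral_prod_symm _ hg, integral_conv hg', ← integral_const_mul]
  refine integral_congr_ae (ae_of_all _ fun k ↦ ?_)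
  simp only [integral_mul_poissonMeasure r₁ fun j ↦ g (j + k)]
  simp_rw [add_right_comm, add_comm k]

theorem integral_fst_div_add_prod_poissonMeasure (r₁ r₂ : ℝ≥0) :
    ∫ z : ℕ × ℕ, (z.1 : ℝ) / (z.1 + z.2) ∂(poissonMeasure r₁).prod (poissonMeasure r₂)
      = r₁ * ∫ n, ((n + 1 : ℕ) : ℝ)⁻¹ ∂poissonMeasure (r₁ + r₂) := by
  have hratio_le (z : ℕ × ℕ) : ‖(z.1 : ℝ) * ((z.1 + z.2 : ℕ) : ℝ)⁻¹‖ ≤ 1 := by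
    rw [Real.norm_of_nonneg (by positivity), ← div_eq_mul_inv]
    exact div_le_one_of_le₀ (by simp) (by positivity)
  have hinv_le (n : ℕ) : ‖((n + 1 : ℕ) : ℝ)⁻¹‖ ≤ 1 := by
    rw [Real.norm_of_nonneg (by positivity)]
    exact inv_le_one_of_one_le₀ (by simp)
  have h := integral_fst_mul_comp_add_prod_poissonMeasure r₁ r₂ (fun n ↦ (n : ℝ)⁻¹)
    (.of_bound .of_discrete 1 (ae_of_all _ hratio_le))
    (.of_bound .of_discrete 1 (ae_of_all _ hinv_le))
  simpa only [div_eq_mul_inv, Nat.cast_add] using h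

/-- If `N₁, N₂` are independent Poisson random variables with means `l, u > 0`, then
`E[N₁/(N₁+N₂)] = (l/(l+u))·(1 − exp(−(l+u)))`, where the ratio is `0` on the event
`N₁ + N₂ = 0` (which agrees with Lean's convention `0/0 = 0`, since `N₁ + N₂ = 0`
forces `N₁ = 0`). -/
theorem poisson_fraction_expectation
    {Ω : Type*} [MeasurableSpace Ω] (P : Measure Ω) [IsProbabilityMeasure P]
    (l u : ℝ) (hl : 0 < l) (hu : 0 < u)
    (N₁ N₂ : Ω → ℕ) (hm₁ : Measurable N₁) (hm₂ : Measurable N₂)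
    (hind : IndepFun N₁ N₂ P)
    (hd₁ : Measure.map N₁ P = poissonMeasure l.toNNReal)
    (hd₂ : Measure.map N₂ P = poissonMeasure u.toNNReal) :
    ∫ ω, (if N₁ ω + N₂ ω = 0 then 0 else
        (N₁ ω : ℝ) / ((N₁ ω : ℝ) + (N₂ ω : ℝ))) ∂P
      = (l / (l + u)) * (1 - Real.exp (-(l + u))) := by
  have hlaw : P.map (fun ω ↦ (N₁ ω, N₂ ω))
      = (poissonMeasure l.toNNReal).prod (poissonMeasure u.toNNReal) := by
    rw [← hd₁, ← hd₂]
    exact (indepFun_iff_map_prod_eq_prod_map_map hm₁.aemeasurable hm₂.aemeasurable).mp hind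
  have hsum : ((l.toNNReal + u.toNNReal : ℝ≥0) : ℝ) = l + u := by
    rw [NNReal.coe_add, Real.coe_toNNReal l hl.le, Real.coe_toNNReal u hu.le]
  have hmass := mul_integral_inv_succ_poissonMeasure (l.toNNReal + u.toNNReal)
  rw [hsum] at hmass
  -- `0 / 0 = 0` already covers the event `N₁ + N₂ = 0`
  have hratio (ω : Ω) : (if N₁ ω + N₂ ω = 0 then 0 else
      (N₁ ω : ℝ) / ((N₁ ω : ℝ) + (N₂ ω : ℝ))) = (N₁ ω : ℝ) / ((N₁ ω : ℝ) + (N₂ ω : ℝ)) := by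
    split_ifs with h
    · simp [Nat.eq_zero_of_add_eq_zero_right h]
    · rfl
  simp_rw [hratio]
  rw [← integral_map (f := fun z : ℕ × ℕ ↦ (z.1 : ℝ) / (z.1 + z.2))
      (hm₁.prodMk hm₂).aemeasurable .of_discrete, hlaw,
    integral_fst_div_add_prod_poissonMeasure, Real.coe_toNNReal l hl.le, ← hmass]
  field_simp
end

section
/- Fix a real β ≥ 2 and a sequence a : ℕ → ℝ with a(n) > 0 for all n. For each n let N_p(n), N_s(n) be independent ℕ-valued random variables with Poisson distributions of means n·a(n) and n^β·a(n), respectively. Then E[ N_p(n)/(N_p(n)+N_s(n)) ] → 0 as n → ∞, where the ratio is defined to be 0 on the event N_p(n)+N_s(n) = 0. Hence a uniformly randomly selected node in a cell is a secondary node with probability tending to 1. -/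
/-!
Bound `p / (p + s)` by `p / (s + 1)`. For independent counts the expectation of the latter factors
as `E[N_p] · E[1 / (N_s + 1)]`, and for `N ~ Poisson(λ)` the identity
`(k + 1) P(N = k + 1) = λ P(N = k)` gives `E[N] = λ` and `λ E[1 / (N + 1)] = P(N ≥ 1) ≤ 1`.
Hence the expected primary fraction is at most `n a(n) / (n^β a(n)) = n^(1-β) → 0`.
-/

open MeasureTheory ProbabilityTheory Real Filter Topology
open scoped ENNReal NNReal

namespace ProbabilityTheory

lemma tsum_poissonMeasure_singleton (r : ℝ≥0) : ∑' k, poissonMeasure r {k} = 1 := by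
  simpa using (lintegral_countable' (μ := poissonMeasure r) (fun _ => 1)).symm

lemma natCast_succ_mul_poissonMeasure_singleton_succ (r : ℝ≥0) (k : ℕ) :
    ((k + 1 : ℕ) : ℝ≥0∞) * poissonMeasure r {k + 1} = r * poissonMeasure r {k} := by
  rw [poissonMeasure_singleton, poissonMeasure_singleton, ← ENNReal.ofReal_natCast,
    ← ENNReal.ofReal_coe_nnreal, ← ENNReal.ofReal_mul (by positivity),
    ← ENNReal.ofReal_mul (by positivity), Nat.factorial_succ]
  congr 1
  push_cast
  field_simp
  ring

lemma lintegral_natCast_poissonMeasure (r : ℝ≥0) :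
    ∫⁻ k, (k : ℝ≥0∞) ∂poissonMeasure r = r := by
  rw [lintegral_countable', tsum_eq_zero_add' ENNReal.summable]
  simp_rw [natCast_succ_mul_poissonMeasure_singleton_succ, ENNReal.tsum_mul_left,
    tsum_poissonMeasure_singleton]
  simp

lemma lintegral_inv_natCast_succ_poissonMeasure_le (r : ℝ≥0) :
    ∫⁻ k, ((k : ℝ≥0∞) + 1)⁻¹ ∂poissonMeasure r ≤ (r : ℝ≥0∞)⁻¹ := by
  rw [ENNReal.le_inv_iff_mul_le, lintegral_countable', mul_comm, ← ENNReal.tsum_mul_left]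
  calc ∑' k : ℕ, (r : ℝ≥0∞) * (((k : ℝ≥0∞) + 1)⁻¹ * poissonMeasure r {k})
      = ∑' k : ℕ, poissonMeasure r {k + 1} := by
        refine tsum_congr fun k => ?_
        rw [mul_left_comm, ← natCast_succ_mul_poissonMeasure_singleton_succ, ← mul_assoc,
          Nat.cast_succ, ENNReal.inv_mul_cancel (by simp) (by simp), one_mul]
    _ ≤ ∑' k : ℕ, poissonMeasure r {k} :=
        ENNReal.tsum_comp_le_tsum_of_injective (add_left_injective 1) _
    _ = 1 := tsum_poissonMeasure_singleton r

end ProbabilityTheory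

noncomputable def primaryFraction (p s : ℕ) : ℝ :=
  if p + s = 0 then 0 else (p : ℝ) / ((p : ℝ) + (s : ℝ))

lemma primaryFraction_nonneg (p s : ℕ) : 0 ≤ primaryFraction p s := by
  unfold primaryFraction
  split_ifs <;> positivity

lemma ofReal_primaryFraction_le (p s : ℕ) :
    ENNReal.ofReal (primaryFraction p s) ≤ p / (s + 1) := by
  rcases Nat.eq_zero_or_pos p with rfl | hp
  · simp [primaryFraction]
  have hps : p + s ≠ 0 := by omega
  have hle : (p : ℝ) / (p + s) ≤ p / (s + 1) := by
    have hp : (1 : ℝ) ≤ p := by exact_mod_cast hp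
    exact div_le_div_of_nonneg_left (by positivity) (by positivity) (by linarith)
  rw [primaryFraction, if_neg hps]
  refine (ENNReal.ofReal_le_ofReal hle).trans_eq ?_
  rw [ENNReal.ofReal_div_of_pos (by positivity), ENNReal.ofReal_natCast,
    ENNReal.ofReal_add (by positivity) zero_le_one, ENNReal.ofReal_natCast, ENNReal.ofReal_one]

section Independent

variable {Ω : Type*} [MeasurableSpace Ω] {P : Measure Ω} {X Y : Ω → ℕ} {r s : ℝ≥0}

lemma lintegral_ofReal_primaryFraction_le (hX : Measurable X) (hY : Measurable Y)
    (hXY : IndepFun X Y P) (hXr : P.map X = poissonMeasure r) (hYs : P.map Y = poissonMeasure s) :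
    ∫⁻ ω, ENNReal.ofReal (primaryFraction (X ω) (Y ω)) ∂P ≤ r / s := by
  let φ : ℕ → ℝ≥0∞ := fun k => k
  let ψ : ℕ → ℝ≥0∞ := fun k => (k + 1)⁻¹
  calc _ ≤ ∫⁻ ω, (X ω : ℝ≥0∞) * ((Y ω : ℝ≥0∞) + 1)⁻¹ ∂P :=
        lintegral_mono fun ω => (ofReal_primaryFraction_le _ _).trans_eq (div_eq_mul_inv _ _)
    _ = (∫⁻ ω, (X ω : ℝ≥0∞) ∂P) * ∫⁻ ω, ((Y ω : ℝ≥0∞) + 1)⁻¹ ∂P :=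
        lintegral_mul_eq_lintegral_mul_lintegral_of_indepFun
          ((Measurable.of_discrete (f := φ)).comp hX) ((Measurable.of_discrete (f := ψ)).comp hY)
          (hXY.comp (φ := φ) (ψ := ψ) .of_discrete .of_discrete)
    _ = (∫⁻ k, (k : ℝ≥0∞) ∂P.map X) * ∫⁻ k, ((k : ℝ≥0∞) + 1)⁻¹ ∂P.map Y := by
        rw [lintegral_map .of_discrete hX, lintegral_map .of_discrete hY]
    _ ≤ r / s := by
        rw [hXr, hYs, lintegral_natCast_poissonMeasure, div_eq_mul_inv]
        gcongr
        exact lintegral_inv_natCast_succ_poissonMeasure_le s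

lemma integral_primaryFraction_le (hX : Measurable X) (hY : Measurable Y)
    (hXY : IndepFun X Y P) (hXr : P.map X = poissonMeasure r) (hYs : P.map Y = poissonMeasure s)
    (hs : s ≠ 0) :
    ∫ ω, primaryFraction (X ω) (Y ω) ∂P ≤ r / s := by
  have h_meas : Measurable fun ω => primaryFraction (X ω) (Y ω) :=
    (Measurable.of_discrete (f := fun q : ℕ × ℕ => primaryFraction q.1 q.2)).comp (hX.prodMk hY)
  rw [integral_eq_lintegral_of_nonneg_ae (.of_forall fun ω => primaryFraction_nonneg _ _)
    h_meas.aestronglyMeasurable]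
  calc _ ≤ ((r : ℝ≥0∞) / s).toReal :=
        ENNReal.toReal_mono (ENNReal.div_ne_top ENNReal.coe_ne_top (by simpa))
          (lintegral_ofReal_primaryFraction_le hX hY hXY hXr hYs)
    _ = r / s := by simp

end Independent

theorem relay_is_secondary_whp_general
    (β : ℝ) (hβ : 2 ≤ β) (a : ℕ → ℝ) (ha : ∀ n, 0 < a n)
    (Ω : ℕ → Type) (mΩ : ∀ n, MeasurableSpace (Ω n))
    (P : ∀ n, Measure (Ω n))
    (Np Ns : ∀ n, Ω n → ℕ)
    (hmp : ∀ n, Measurable (Np n)) (hms : ∀ n, Measurable (Ns n))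
    (hind : ∀ n, IndepFun (Np n) (Ns n) (P n))
    (hdp : ∀ n : ℕ, Measure.map (Np n) (P n) = poissonMeasure ((n * a n).toNNReal))
    (hds : ∀ n : ℕ, Measure.map (Ns n) (P n) = poissonMeasure (((n : ℝ) ^ β * a n).toNNReal)) :
    Tendsto
      (fun n => ∫ ω, (if Np n ω + Ns n ω = 0 then 0 else
          (Np n ω : ℝ) / ((Np n ω : ℝ) + (Ns n ω : ℝ))) ∂(P n))
      atTop (𝓝 0) := by
  have h_bound : ∀ n : ℕ, 0 < n →
      ∫ ω, primaryFraction (Np n ω) (Ns n ω) ∂(P n) ≤ (n : ℝ) ^ (-(β - 1)) := by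
    intro n hn
    have hn : (0 : ℝ) < n := by exact_mod_cast hn
    have h_primary : 0 < (n : ℝ) * a n := mul_pos hn (ha n)
    have h_secondary : 0 < (n : ℝ) ^ β * a n := mul_pos (rpow_pos_of_pos hn β) (ha n)
    calc _ ≤ ((n * a n).toNNReal : ℝ) / ((n : ℝ) ^ β * a n).toNNReal :=
          integral_primaryFraction_le (hmp n) (hms n) (hind n) (hdp n) (hds n)
            (Real.toNNReal_pos.2 h_secondary).ne'
      _ = n * a n / ((n : ℝ) ^ β * a n) := by
          rw [Real.coe_toNNReal _ h_primary.le, Real.coe_toNNReal _ h_secondary.le]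
      _ = (n : ℝ) ^ (-(β - 1)) := by
          rw [mul_div_mul_right _ _ (ha n).ne', neg_sub, rpow_sub hn, rpow_one]
  refine squeeze_zero' (.of_forall fun n => integral_nonneg fun ω => primaryFraction_nonneg _ _)
    ((eventually_gt_atTop 0).mono h_bound) ?_
  exact (tendsto_rpow_neg_atTop (by linarith)).comp tendsto_natCast_atTop_atTop

/-- Lemma 2 of the paper: fix `β ≥ 2` and positive cell areas `a n`. If, for each `n`,
`N_p n` and `N_s n` are independent Poisson counts with means `n·a n` and `n^β·a n`
(the numbers of primary and secondary nodes in a cell), then the probability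
`E[N_p/(N_p+N_s)]` that a uniformly selected node in the cell is primary tends to `0`
as `n → ∞`; i.e. a randomly selected designated relay node is a secondary node with
high probability. -/
theorem relay_is_secondary_whp
    (β : ℝ) (hβ : 2 ≤ β) (a : ℕ → ℝ) (ha : ∀ n, 0 < a n)
    (Ω : ℕ → Type) (mΩ : ∀ n, MeasurableSpace (Ω n))
    (P : ∀ n, Measure (Ω n)) (hP : ∀ n, IsProbabilityMeasure (P n))
    (Np Ns : ∀ n, Ω n → ℕ)
    (hmp : ∀ n, Measurable (Np n)) (hms : ∀ n, Measurable (Ns n))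
    (hind : ∀ n, IndepFun (Np n) (Ns n) (P n))
    (hdp : ∀ n : ℕ, Measure.map (Np n) (P n) = poissonMeasure ((n * a n).toNNReal))
    (hds : ∀ n : ℕ, Measure.map (Ns n) (P n) = poissonMeasure (((n : ℝ) ^ β * a n).toNNReal)) :
    Tendsto
      (fun n => ∫ ω, (if Np n ω + Ns n ω = 0 then 0 else
          (Np n ω : ℝ) / ((Np n ω : ℝ) + (Ns n ω : ℝ))) ∂(P n))
      atTop (𝓝 0) :=
  relay_is_secondary_whp_general β hβ a ha Ω mΩ P Np Ns hmp hms hind hdp hds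
end

section
/- Let U₁, U₂, V₁, V₂ be independent random variables, each uniformly distributed on the interval [0,1], and let s be a real number with 0 < s < 1. Then (2/3)·(1/s) ≤ E[ ⌈|U₁ − V₁|/s⌉ + ⌈|U₂ − V₂|/s⌉ ] ≤ (2/3)·(1/s) + 2, where ⌈·⌉ denotes the ceiling function (viewed as a real number). -/
/-!
Since `x ≤ ⌈x⌉ < x + 1`, each term `⌈|Uᵢ - Vᵢ| / s⌉` has expectation within `1` of
`E|Uᵢ - Vᵢ| / s`, and for independent uniform `U, V` on `[0,1]` one has `E|U - V| = 1/3`.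
-/

open MeasureTheory ProbabilityTheory Set

section Ceil

variable {Ω : Type*} [MeasurableSpace Ω] {P : Measure Ω} {X : Ω → ℝ}

lemma abs_ceil_le_abs_add_one (x : ℝ) : |(⌈x⌉ : ℝ)| ≤ |x| + 1 := by
  rw [abs_le]
  constructor <;> cases abs_cases x <;> linarith [Int.le_ceil x, Int.ceil_lt_add_one x]

lemma MeasureTheory.Integrable.ceil [IsFiniteMeasure P] (hX : Integrable X P) :
    Integrable (fun ω => (⌈X ω⌉ : ℝ)) P := by
  have hceil : Measurable fun x : ℝ => (⌈x⌉ : ℝ) := by fun_prop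
  exact (hX.norm.add (integrable_const 1)).mono'
    (hceil.comp_aemeasurable hX.aemeasurable).aestronglyMeasurable
    (ae_of_all _ fun ω => abs_ceil_le_abs_add_one (X ω))

lemma integral_le_integral_ceil [IsFiniteMeasure P] (hX : Integrable X P) :
    ∫ ω, X ω ∂P ≤ ∫ ω, (⌈X ω⌉ : ℝ) ∂P :=
  integral_mono hX hX.ceil fun ω => Int.le_ceil (X ω)

lemma integral_ceil_le_integral_add_one [IsProbabilityMeasure P] (hX : Integrable X P) :
    ∫ ω, (⌈X ω⌉ : ℝ) ∂P ≤ ∫ ω, X ω ∂P + 1 := by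
  calc ∫ ω, (⌈X ω⌉ : ℝ) ∂P ≤ ∫ ω, (X ω + 1) ∂P :=
        integral_mono hX.ceil (hX.add (integrable_const 1)) fun ω => (Int.ceil_lt_add_one _).le
    _ = ∫ ω, X ω ∂P + 1 := by simp [integral_add hX (integrable_const 1)]

end Ceil

lemma intervalIntegral_abs_sub_zero_one {a : ℝ} (ha : a ∈ Icc (0 : ℝ) 1) :
    ∫ y in (0 : ℝ)..1, |a - y| = a ^ 2 - a + 1 / 2 := by
  have hcont : Continuous fun y : ℝ => |a - y| := by fun_prop
  rw [← intervalIntegral.integral_add_adjacent_intervals (b := a)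
    (hcont.intervalIntegrable _ _) (hcont.intervalIntegrable _ _)]
  have hleft : ∫ y in (0 : ℝ)..a, |a - y| = ∫ y in (0 : ℝ)..a, (a - y) :=
    intervalIntegral.integral_congr fun y hy => by
      rw [uIcc_of_le ha.1] at hy
      exact abs_of_nonneg (by linarith [hy.2])
  have hright : ∫ y in a..(1 : ℝ), |a - y| = ∫ y in a..(1 : ℝ), (y - a) :=
    intervalIntegral.integral_congr fun y hy => by
      rw [uIcc_of_le ha.2] at hy
      exact abs_sub_comm a y ▸ abs_of_nonneg (by linarith [hy.1])
  rw [hleft, hright, intervalIntegral.integral_sub intervalIntegrable_const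
      intervalIntegral.intervalIntegrable_id,
    intervalIntegral.integral_sub intervalIntegral.intervalIntegrable_id intervalIntegrable_const]
  simp only [integral_id, intervalIntegral.integral_const, smul_eq_mul]
  ring

lemma integrable_abs_sub_uniform_prod :
    Integrable (fun p : ℝ × ℝ => |p.1 - p.2|)
      ((volume.restrict (Icc (0 : ℝ) 1)).prod (volume.restrict (Icc (0 : ℝ) 1))) := by
  rw [Measure.prod_restrict]
  exact ContinuousOn.integrableOn_compact (isCompact_Icc.prod isCompact_Icc) (by fun_prop)

lemma integral_abs_sub_uniform_prod :
    ∫ p : ℝ × ℝ, |p.1 - p.2|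
      ∂(volume.restrict (Icc (0 : ℝ) 1)).prod (volume.restrict (Icc (0 : ℝ) 1)) = 1 / 3 := by
  have hinner : ∀ a ∈ Icc (0 : ℝ) 1, ∫ y in Icc (0 : ℝ) 1, |a - y| = a ^ 2 - a + 1 / 2 := by
    intro a ha
    rw [integral_Icc_eq_integral_Ioc, ← intervalIntegral.integral_of_le zero_le_one]
    exact intervalIntegral_abs_sub_zero_one ha
  have hint := integrable_abs_sub_uniform_prod
  rw [Measure.prod_restrict] at hint ⊢
  rw [setIntegral_prod _ hint, setIntegral_congr_fun measurableSet_Icc hinner,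
    integral_Icc_eq_integral_Ioc, ← intervalIntegral.integral_of_le zero_le_one]
  norm_num [integral_id]

section Uniform

variable {Ω : Type*} [MeasurableSpace Ω] {P : Measure Ω} {U V : Ω → ℝ}

lemma hasLaw_of_map_eq {𝓧 : Type*} [MeasurableSpace 𝓧] {X : Ω → 𝓧} {μ : Measure 𝓧}
    (hX : P.map X = μ) (hμ : μ ≠ 0) : HasLaw X μ P :=
  ⟨.of_map_ne_zero (hX ▸ hμ), hX⟩

variable [IsProbabilityMeasure P] (hU : HasLaw U (volume.restrict (Icc (0 : ℝ) 1)) P)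
  (hV : HasLaw V (volume.restrict (Icc (0 : ℝ) 1)) P) (hUV : IndepFun U V P)
include hU hV hUV

lemma integrable_abs_sub_of_uniform : Integrable (fun ω => |U ω - V ω|) P := by
  have hlaw := hUV.hasLaw_prod hU hV
  have h := integrable_abs_sub_uniform_prod
  rw [← hlaw.map_eq, integrable_map_measure (by fun_prop) hlaw.aemeasurable] at h
  exact h

lemma integral_abs_sub_of_uniform : ∫ ω, |U ω - V ω| ∂P = 1 / 3 := by
  have hlaw := hUV.hasLaw_prod hU hV
  rw [← integral_abs_sub_uniform_prod, ← hlaw.integral_comp (by fun_prop), Function.comp_def]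

lemma integral_ceil_abs_sub_div_bounds_of_uniform (s : ℝ) :
    Integrable (fun ω => (⌈|U ω - V ω| / s⌉ : ℝ)) P ∧
      1 / 3 * (1 / s) ≤ ∫ ω, (⌈|U ω - V ω| / s⌉ : ℝ) ∂P ∧
      ∫ ω, (⌈|U ω - V ω| / s⌉ : ℝ) ∂P ≤ 1 / 3 * (1 / s) + 1 := by
  have hint := (integrable_abs_sub_of_uniform hU hV hUV).div_const s
  have hmean : ∫ ω, |U ω - V ω| / s ∂P = 1 / 3 * (1 / s) := by
    rw [integral_div, integral_abs_sub_of_uniform hU hV hUV]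
    ring
  refine ⟨hint.ceil, ?_, ?_⟩
  · exact hmean ▸ integral_le_integral_ceil hint
  · exact hmean ▸ integral_ceil_le_integral_add_one hint

end Uniform

theorem expected_hop_count_general
    {Ω : Type*} [MeasurableSpace Ω] (P : Measure Ω) [IsProbabilityMeasure P]
    (U₁ U₂ V₁ V₂ : Ω → ℝ)
    (hind : iIndepFun ![U₁, U₂, V₁, V₂] P)
    (hdist : ∀ i, Measure.map (![U₁, U₂, V₁, V₂] i) P
      = MeasureTheory.volume.restrict (Set.Icc (0 : ℝ) 1))
    (s : ℝ) :
    (2 / 3) * (1 / s)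
        ≤ ∫ ω, ((⌈|U₁ ω - V₁ ω| / s⌉ : ℝ) + (⌈|U₂ ω - V₂ ω| / s⌉ : ℝ)) ∂P ∧
      ∫ ω, ((⌈|U₁ ω - V₁ ω| / s⌉ : ℝ) + (⌈|U₂ ω - V₂ ω| / s⌉ : ℝ)) ∂P
        ≤ (2 / 3) * (1 / s) + 2 := by
  have hlaw : ∀ i, HasLaw (![U₁, U₂, V₁, V₂] i) (volume.restrict (Icc (0 : ℝ) 1)) P :=
    fun i => hasLaw_of_map_eq (hdist i) (by simp)
  obtain ⟨hint₁, hlow₁, hup₁⟩ := integral_ceil_abs_sub_div_bounds_of_uniform (U := U₁) (V := V₁)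
    (hlaw 0) (hlaw 2) (hind.indepFun (i := 0) (j := 2) (by decide)) s
  obtain ⟨hint₂, hlow₂, hup₂⟩ := integral_ceil_abs_sub_div_bounds_of_uniform (U := U₂) (V := V₂)
    (hlaw 1) (hlaw 3) (hind.indepFun (i := 1) (j := 3) (by decide)) s
  rw [integral_add hint₁ hint₂]
  constructor <;> linarith

/-- Expected hop count for horizontal-vertical routing: if the source `(U₁, U₂)` and
destination `(V₁, V₂)` coordinates are independent and uniform on `[0,1]`, and the
grid cells have side length `0 < s < 1`, then the expected number of hops
`⌈|U₁−V₁|/s⌉ + ⌈|U₂−V₂|/s⌉` lies between `(2/3)·(1/s)` and `(2/3)·(1/s) + 2`. -/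
theorem expected_hop_count
    {Ω : Type*} [MeasurableSpace Ω] (P : Measure Ω) [IsProbabilityMeasure P]
    (U₁ U₂ V₁ V₂ : Ω → ℝ)
    (hm : ∀ i, Measurable (![U₁, U₂, V₁, V₂] i))
    (hind : iIndepFun ![U₁, U₂, V₁, V₂] P)
    (hdist : ∀ i, Measure.map (![U₁, U₂, V₁, V₂] i) P
      = MeasureTheory.volume.restrict (Set.Icc (0 : ℝ) 1))
    (s : ℝ) (hs0 : 0 < s) (hs1 : s < 1) :
    (2 / 3) * (1 / s)
        ≤ ∫ ω, ((⌈|U₁ ω - V₁ ω| / s⌉ : ℝ) + (⌈|U₂ ω - V₂ ω| / s⌉ : ℝ)) ∂P ∧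
      ∫ ω, ((⌈|U₁ ω - V₁ ω| / s⌉ : ℝ) + (⌈|U₂ ω - V₂ ω| / s⌉ : ℝ)) ∂P
        ≤ (2 / 3) * (1 / s) + 2 :=
  expected_hop_count_general P U₁ U₂ V₁ V₂ hind hdist s
end
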